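/- Two distinct complete K_n-graphs freely contained in a binomial B(n+1)-configuration have exactly n-1 common sides (lines of M extending an edge of both graphs); three pairwise distinct freely contained K_n-graphs have exactly one side common to all three. -/

import Mathlib

/-!
Through a vertex `p` of a freely contained `K_n` on `X` pass exactly `n - 1` lines, and the
`n - 1` edges at `p` already extend to `n - 1` distinct sides: every line through a vertex is a
side. The `C(n,2)` sides have pairwise distinct third points off `X`, and there are exactly
`C(n+1,2) - n = C(n,2)` points off `X`, so every such point lies on a side.

Hence two distinct graphs `X₁, X₂` meet: a point of `X₁ \ X₂` lies on a side of `X₂`, which is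
then a side of `X₁` too, and two 2-subsets of a line meet. They meet in one point `p` only, since
for `a ∈ X₁ \ X₂` the sides `ap, aq` of `X₁` would be distinct sides of `X₂` meeting off `X₂`.
The common sides of `X₁, X₂` are then exactly the `n - 1` lines through `p`.

For three graphs, the common vertices `p` of `X₁, X₂` and `q` of `X₁, X₃` differ, as a line
through a vertex common to all three would need a further point of each. The sides common to all
three are then the lines through both `p` and `q`, i.e. the single line `pq`.
-/

open Finset

/-- A partial Steiner triple system: a finite incidence structure given by its
set of lines (3-element subsets of the point set) such that two distinct
points lie on at most one common line. -/
structure PSTS (S : Type) where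
  lines : Finset (Finset S)
  card3 : ∀ L ∈ lines, L.card = 3
  unique : ∀ L₁ ∈ lines, ∀ L₂ ∈ lines, ∀ a b : S, a ≠ b →
    a ∈ L₁ → b ∈ L₁ → a ∈ L₂ → b ∈ L₂ → L₁ = L₂

/-- The rank of a point: the number of lines through it. -/
def pointRank {S : Type} [DecidableEq S] (M : PSTS S) (p : S) : ℕ :=
  (M.lines.filter (fun L => p ∈ L)).card

/-- A binomial B(m)-configuration: C(m,2) points, each of rank m-2, and C(m,3) lines. -/
def IsBinomial {S : Type} [Fintype S] [DecidableEq S] (M : PSTS S) (m : ℕ) : Prop :=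
  Fintype.card S = Nat.choose m 2 ∧ M.lines.card = Nat.choose m 3 ∧
    ∀ p : S, pointRank M p = m - 2

/-- `L` is a side of the complete graph on `X`: a line of `M` meeting `X` in
exactly two points (the extension of an edge of `K_X`). -/
def IsSide {S : Type} [DecidableEq S] (M : PSTS S) (X L : Finset S) : Prop :=
  L ∈ M.lines ∧ (L ∩ X).card = 2

instance {S : Type} [DecidableEq S] (M : PSTS S) (X L : Finset S) :
    Decidable (IsSide M X L) := by
  unfold IsSide; infer_instance

/-- The complete graph on the vertex set `X` is freely contained in `M`:
every edge of `K_X` extends to a (necessarily unique) line of `M` which meets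
`X` in exactly two points (hence distinct edges extend to distinct lines), and
two distinct sides never meet outside `X`. -/
def FreelyContains {S : Type} [DecidableEq S] (M : PSTS S) (X : Finset S) : Prop :=
  (∀ a ∈ X, ∀ b ∈ X, a ≠ b → ∃ L ∈ M.lines, a ∈ L ∧ b ∈ L ∧ (L ∩ X).card = 2) ∧
  (∀ L₁ L₂ : Finset S, IsSide M X L₁ → IsSide M X L₂ → L₁ ≠ L₂ →
    ∀ p, p ∈ L₁ → p ∈ L₂ → p ∈ X)

/-- `(Z,G)` is a B(m)-configuration regularly contained in `M` (a subspace):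
the lines of `G` are lines of `M` lying in `Z`, every line of `M` meeting `Z`
in at least two points belongs to `G`, and `(Z,G)` has the binomial B(m) parameters. -/
def RegularBinomialSub {S : Type} [DecidableEq S] (M : PSTS S)
    (Z : Finset S) (G : Finset (Finset S)) (m : ℕ) : Prop :=
  G ⊆ M.lines ∧ (∀ L ∈ G, L ⊆ Z) ∧
  (∀ L ∈ M.lines, 2 ≤ (L ∩ Z).card → L ∈ G) ∧
  Z.card = Nat.choose m 2 ∧ G.card = Nat.choose m 3 ∧
  ∀ p ∈ Z, (G.filter (fun L => p ∈ L)).card = m - 2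

/-- The lines of the combinatorial Grassmannian G(Y,2): triples of 2-subsets
of `Y` contained in a common 3-subset. -/
def GrasLines (Y : Type) [Fintype Y] [DecidableEq Y] :
    Finset (Finset {e : Finset Y // e.card = 2}) :=
  (Finset.univ.filter (fun f : Finset Y => f.card = 3)).image
    (fun f => Finset.univ.filter (fun e : {e : Finset Y // e.card = 2} => e.val ⊆ f))

/-- `M` freely contains exactly `m` complete `K_j`-graphs. -/
def ExactlyKGraphs {S : Type} [DecidableEq S] (M : PSTS S) (j m : ℕ) : Prop :=
  ∃ f : Fin m → Finset S, Function.Injective f ∧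
    (∀ i, (f i).card = j ∧ FreelyContains M (f i)) ∧
    (∀ X : Finset S, X.card = j → FreelyContains M X → ∃ i, X = f i)

namespace PSTS

variable {S : Type} [DecidableEq S] {M : PSTS S}

lemma eq_of_two_le_card_inter {L₁ L₂ : Finset S} (h₁ : L₁ ∈ M.lines) (h₂ : L₂ ∈ M.lines)
    (h : 2 ≤ #(L₁ ∩ L₂)) : L₁ = L₂ := by
  obtain ⟨a, ha, b, hb, hab⟩ := one_lt_card.1 h
  rw [mem_inter] at ha hb
  exact M.unique L₁ h₁ L₂ h₂ a b hab ha.1 hb.1 ha.2 hb.2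

lemma card_filter_mem_and_mem {a b : S} (hab : a ≠ b) {L₀ : Finset S} (hL₀ : L₀ ∈ M.lines)
    (ha : a ∈ L₀) (hb : b ∈ L₀) : #{L ∈ M.lines | a ∈ L ∧ b ∈ L} = 1 := by
  refine card_eq_one.2 ⟨L₀, eq_singleton_iff_unique_mem.2 ⟨mem_filter.2 ⟨hL₀, ha, hb⟩, ?_⟩⟩
  rintro L hL
  obtain ⟨hL, haL, hbL⟩ := mem_filter.1 hL
  exact M.unique L hL L₀ hL₀ a b hab haL hbL ha hb

end PSTS

section Sides

variable {S : Type} [DecidableEq S] {M : PSTS S} {X L : Finset S}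

lemma IsSide.card_sdiff (h : IsSide M X L) : #(L \ X) = 1 := by
  have := card_sdiff_add_card_inter L X
  have := M.card3 L h.1
  have := h.2
  omega

lemma IsSide.exists_mem_inter {Y : Finset S} (hX : IsSide M X L) (hY : IsSide M Y L) :
    ∃ c ∈ L, c ∈ X ∩ Y := by
  obtain ⟨c, hc⟩ := inter_nonempty_of_card_lt_card_add_card inter_subset_left inter_subset_left
    (by rw [M.card3 L hX.1, hX.2, hY.2]; norm_num : #L < #(L ∩ X) + #(L ∩ Y))
  simp only [mem_inter] at hc
  exact ⟨c, hc.1.1, mem_inter.2 ⟨hc.1.2, hc.2.2⟩⟩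

namespace FreelyContains

lemma card_sides (hX : FreelyContains M X) : #{L ∈ M.lines | IsSide M X L} = (#X).choose 2 := by
  rw [← card_powersetCard 2 X]
  refine card_bij (fun L _ => L ∩ X) (fun L hL => ?_) (fun L₁ hL₁ L₂ hL₂ heq => ?_) ?_
  · exact mem_powersetCard.2 ⟨inter_subset_right, (mem_filter.1 hL).2.2⟩
  · obtain ⟨hL₁, -, hc⟩ := mem_filter.1 hL₁
    refine M.eq_of_two_le_card_inter hL₁ (mem_filter.1 hL₂).1 (hc ▸ card_le_card ?_)
    exact subset_inter inter_subset_left (heq ▸ inter_subset_left)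
  · intro e he
    obtain ⟨heX, he2⟩ := mem_powersetCard.1 he
    obtain ⟨a, b, hab, rfl⟩ := card_eq_two.1 he2
    obtain ⟨L, hL, haL, hbL, hc⟩ := hX.1 a (heX (by simp)) b (heX (by simp)) hab
    refine ⟨L, mem_filter.2 ⟨hL, hL, hc⟩, (eq_of_subset_of_card_le ?_ (by rw [hc, he2])).symm⟩
    exact insert_subset (mem_inter.2 ⟨haL, heX (by simp)⟩)
      (singleton_subset_iff.2 (mem_inter.2 ⟨hbL, heX (by simp)⟩))

lemma card_erase_le_card_sides_through (hX : FreelyContains M X) {p : S} (hp : p ∈ X) :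
    #(X.erase p) ≤ #{L ∈ M.lines | p ∈ L ∧ IsSide M X L} := by
  calc #(X.erase p)
      ≤ #({L ∈ M.lines | p ∈ L ∧ IsSide M X L}.biUnion fun L => (L ∩ X).erase p) := by
        refine card_le_card fun b hb => ?_
        obtain ⟨hbp, hbX⟩ := mem_erase.1 hb
        obtain ⟨L, hL, hpL, hbL, hc⟩ := hX.1 p hp b hbX hbp.symm
        exact mem_biUnion.2
          ⟨L, mem_filter.2 ⟨hL, hpL, hL, hc⟩, mem_erase.2 ⟨hbp, mem_inter.2 ⟨hbL, hbX⟩⟩⟩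
    _ ≤ #{L ∈ M.lines | p ∈ L ∧ IsSide M X L} * 1 := by
        refine card_biUnion_le_card_mul _ _ _ fun L hL => ?_
        obtain ⟨-, hpL, -, hc⟩ := mem_filter.1 hL
        rw [card_erase_of_mem (mem_inter.2 ⟨hpL, hp⟩), hc]
    _ = _ := mul_one _

lemma isSide_of_mem (hX : FreelyContains M X) {p : S} (hp : p ∈ X)
    (hrank : pointRank M p ≤ #X - 1) (hL : L ∈ M.lines) (hpL : p ∈ L) : IsSide M X L := by
  have hsub : {L ∈ M.lines | p ∈ L ∧ IsSide M X L} ⊆ {L ∈ M.lines | p ∈ L} :=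
    fun L' hL' => mem_filter.2 ⟨(mem_filter.1 hL').1, (mem_filter.1 hL').2.1⟩
  have hle := hX.card_erase_le_card_sides_through hp
  rw [card_erase_of_mem hp] at hle
  have heq := eq_of_subset_of_card_le hsub (hle.trans' hrank)
  have hL' : L ∈ {L ∈ M.lines | p ∈ L} := mem_filter.2 ⟨hL, hpL⟩
  rw [← heq] at hL'
  exact (mem_filter.1 hL').2.2

lemma exists_isSide_mem [Fintype S] (hX : FreelyContains M X)
    (hS : Fintype.card S ≤ #X + (#X).choose 2) {a : S} (ha : a ∉ X) :
    ∃ L, IsSide M X L ∧ a ∈ L := by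
  set sides := {L ∈ M.lines | IsSide M X L}
  -- distinct sides have distinct third points, and there are as many sides as points off `X`
  have hdisj : (sides : Set (Finset S)).PairwiseDisjoint (· \ X) := by
    intro L₁ hL₁ L₂ hL₂ hne
    refine disjoint_left.2 fun c hc₁ hc₂ => (mem_sdiff.1 hc₁).2 ?_
    exact hX.2 L₁ L₂ (mem_filter.1 hL₁).2 (mem_filter.1 hL₂).2 hne c
      (mem_sdiff.1 hc₁).1 (mem_sdiff.1 hc₂).1
  have hsub : sides.biUnion (· \ X) ⊆ univ \ X :=
    biUnion_subset.2 fun L _ => sdiff_subset_sdiff (subset_univ L) subset_rfl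
  have hcard : #(univ \ X) ≤ #(sides.biUnion (· \ X)) := by
    rw [card_biUnion hdisj, sum_congr rfl fun L hL => (mem_filter.1 hL).2.card_sdiff,
      ← card_eq_sum_ones, hX.card_sides, card_univ_sdiff]
    omega
  have haU : a ∈ sides.biUnion (· \ X) := by
    rw [eq_of_subset_of_card_le hsub hcard]
    exact mem_sdiff.2 ⟨mem_univ a, ha⟩
  obtain ⟨L, hL, haL⟩ := mem_biUnion.1 haU
  exact ⟨L, (mem_filter.1 hL).2, (mem_sdiff.1 haL).1⟩

end FreelyContains

end Sides

namespace IsBinomial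

variable {S : Type} [Fintype S] [DecidableEq S] {M : PSTS S} {n : ℕ} {X X₁ X₂ X₃ L : Finset S}

lemma isSide_of_mem (hM : IsBinomial M (n + 1)) (hXn : #X = n) (hX : FreelyContains M X)
    {p : S} (hp : p ∈ X) (hL : L ∈ M.lines) (hpL : p ∈ L) : IsSide M X L :=
  hX.isSide_of_mem hp (by rw [hM.2.2 p, hXn]; omega) hL hpL

lemma exists_isSide_mem (hM : IsBinomial M (n + 1)) (hXn : #X = n) (hX : FreelyContains M X)
    {a : S} (ha : a ∉ X) : ∃ L, IsSide M X L ∧ a ∈ L :=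
  hX.exists_isSide_mem (by rw [hM.1, hXn, Nat.choose_succ_succ', Nat.choose_one_right]) ha

lemma inter_nonempty (hM : IsBinomial M (n + 1)) (h₁ : #X₁ = n) (h₂ : #X₂ = n)
    (hX₁ : FreelyContains M X₁) (hX₂ : FreelyContains M X₂) {a : S} (ha₁ : a ∈ X₁)
    (ha₂ : a ∉ X₂) : (X₁ ∩ X₂).Nonempty := by
  obtain ⟨L, hL₂, haL⟩ := hM.exists_isSide_mem h₂ hX₂ ha₂
  obtain ⟨c, -, hc⟩ := (hM.isSide_of_mem h₁ hX₁ ha₁ hL₂.1 haL).exists_mem_inter hL₂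
  exact ⟨c, hc⟩

lemma card_inter_le_one (hM : IsBinomial M (n + 1)) (h₂ : #X₂ = n)
    (hX₁ : FreelyContains M X₁) (hX₂ : FreelyContains M X₂) {a : S} (ha₁ : a ∈ X₁)
    (ha₂ : a ∉ X₂) : #(X₁ ∩ X₂) ≤ 1 := by
  refine card_le_one.2 fun p hp q hq => by_contra fun hpq => ?_
  rw [mem_inter] at hp hq
  have hap : a ≠ p := fun h => ha₂ (h ▸ hp.2)
  have haq : a ≠ q := fun h => ha₂ (h ▸ hq.2)
  obtain ⟨L₁, hL₁, haL₁, hpL₁, hc₁⟩ := hX₁.1 a ha₁ p hp.1 hap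
  obtain ⟨L₂, hL₂, haL₂, hqL₂, -⟩ := hX₁.1 a ha₁ q hq.1 haq
  -- `L₁ = L₂` would put the three vertices `a, p, q` of `X₁` on one side of `X₁`
  have hL₁₂ : L₁ ≠ L₂ := by
    rintro rfl
    have h3 := card_le_card (show {a, p, q} ⊆ L₁ ∩ X₁ by
      simp only [insert_subset_iff, singleton_subset_iff, mem_inter]
      exact ⟨⟨haL₁, ha₁⟩, ⟨hpL₁, hp.1⟩, ⟨hqL₂, hq.1⟩⟩)
    rw [card_eq_three.2 ⟨a, p, q, hap, haq, hpq, rfl⟩, hc₁] at h3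
    omega
  exact ha₂ (hX₂.2 L₁ L₂ (hM.isSide_of_mem h₂ hX₂ hp.2 hL₁ hpL₁)
    (hM.isSide_of_mem h₂ hX₂ hq.2 hL₂ hqL₂) hL₁₂ a haL₁ haL₂)

lemma card_inter_eq_one (hM : IsBinomial M (n + 1)) (h₁ : #X₁ = n) (h₂ : #X₂ = n)
    (hX₁ : FreelyContains M X₁) (hX₂ : FreelyContains M X₂) (hne : X₁ ≠ X₂) :
    #(X₁ ∩ X₂) = 1 := by
  obtain ⟨a, ha₁, ha₂⟩ := not_subset.1 fun h => hne (eq_of_subset_of_card_le h (by omega))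
  exact le_antisymm (hM.card_inter_le_one h₂ hX₁ hX₂ ha₁ ha₂)
    (hM.inter_nonempty h₁ h₂ hX₁ hX₂ ha₁ ha₂).card_pos

lemma exists_inter_eq_singleton (hM : IsBinomial M (n + 1)) (h₁ : #X₁ = n) (h₂ : #X₂ = n)
    (hX₁ : FreelyContains M X₁) (hX₂ : FreelyContains M X₂) (hne : X₁ ≠ X₂) :
    ∃ p, X₁ ∩ X₂ = {p} :=
  card_eq_one.1 (hM.card_inter_eq_one h₁ h₂ hX₁ hX₂ hne)

lemma isSide_and_isSide_iff (hM : IsBinomial M (n + 1)) (h₁ : #X₁ = n) (h₂ : #X₂ = n)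
    (hX₁ : FreelyContains M X₁) (hX₂ : FreelyContains M X₂) {p : S} (hp : X₁ ∩ X₂ = {p})
    (hL : L ∈ M.lines) : IsSide M X₁ L ∧ IsSide M X₂ L ↔ p ∈ L := by
  have hpX := mem_inter.1 (hp ▸ mem_singleton_self p)
  refine ⟨fun ⟨hs₁, hs₂⟩ => ?_, fun hpL => ?_⟩
  · obtain ⟨c, hcL, hc⟩ := hs₁.exists_mem_inter hs₂
    rw [hp, mem_singleton] at hc
    exact hc ▸ hcL
  · exact ⟨hM.isSide_of_mem h₁ hX₁ hpX.1 hL hpL, hM.isSide_of_mem h₂ hX₂ hpX.2 hL hpL⟩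

lemma one_lt_of_ne (hM : IsBinomial M (n + 1)) (h₁ : #X₁ = n) (h₂ : #X₂ = n)
    (hX₁ : FreelyContains M X₁) (hX₂ : FreelyContains M X₂) (hne : X₁ ≠ X₂) : 1 < n := by
  have hinter := hM.card_inter_eq_one h₁ h₂ hX₁ hX₂ hne
  by_contra! hn
  have hfill : ∀ {Y}, X₁ ∩ X₂ ⊆ Y → #Y = n → X₁ ∩ X₂ = Y := fun hs hY =>
    eq_of_subset_of_card_le hs (by omega)
  exact hne ((hfill inter_subset_left h₁).symm.trans (hfill inter_subset_right h₂))

lemma disjoint_inter_of_ne (hM : IsBinomial M (n + 1)) (h₁ : #X₁ = n) (h₂ : #X₂ = n)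
    (h₃ : #X₃ = n) (hX₁ : FreelyContains M X₁) (hX₂ : FreelyContains M X₂)
    (hX₃ : FreelyContains M X₃) (h₁₂ : X₁ ≠ X₂) (h₁₃ : X₁ ≠ X₃) (h₂₃ : X₂ ≠ X₃) :
    Disjoint (X₁ ∩ X₂) X₃ := by
  refine disjoint_left.2 fun p hp hp₃ => ?_
  obtain ⟨hp₁, hp₂⟩ := mem_inter.1 hp
  obtain ⟨L, hL⟩ : {L ∈ M.lines | p ∈ L}.Nonempty := card_pos.1 <| by
    rw [← pointRank, hM.2.2 p]
    have := hM.one_lt_of_ne h₁ h₂ hX₁ hX₂ h₁₂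
    omega
  obtain ⟨hL, hpL⟩ := mem_filter.1 hL
  -- the line `L` through `p` is a side of each `Xᵢ`, so it carries a vertex `aᵢ ≠ p` of each
  have hvertex : ∀ {Y}, #Y = n → FreelyContains M Y → p ∈ Y → ∃ y ∈ L ∩ Y, y ≠ p :=
    fun hY hfY hpY => exists_mem_ne (by rw [(hM.isSide_of_mem hY hfY hpY hL hpL).2]; norm_num) p
  obtain ⟨a₁, ha₁, ha₁p⟩ := hvertex h₁ hX₁ hp₁
  obtain ⟨a₂, ha₂, ha₂p⟩ := hvertex h₂ hX₂ hp₂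
  obtain ⟨a₃, ha₃, ha₃p⟩ := hvertex h₃ hX₃ hp₃
  have hsep : ∀ {Y Z y}, #(Y ∩ Z) = 1 → p ∈ Y → p ∈ Z → y ∈ L ∩ Y → y ∈ L ∩ Z → y = p :=
    fun hYZ hpY hpZ hy hy' => card_le_one.1 hYZ.le _
      (mem_inter.2 ⟨(mem_inter.1 hy).2, (mem_inter.1 hy').2⟩) p (mem_inter.2 ⟨hpY, hpZ⟩)
  have h3 := card_le_card (show {a₁, a₂, a₃} ⊆ L.erase p by
    simp only [insert_subset_iff, singleton_subset_iff, mem_erase]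
    exact ⟨⟨ha₁p, (mem_inter.1 ha₁).1⟩, ⟨ha₂p, (mem_inter.1 ha₂).1⟩, ⟨ha₃p, (mem_inter.1 ha₃).1⟩⟩)
  rw [card_eq_three.2 ⟨a₁, a₂, a₃,
      fun h => ha₁p (hsep (hM.card_inter_eq_one h₁ h₂ hX₁ hX₂ h₁₂) hp₁ hp₂ ha₁ (h ▸ ha₂)),
      fun h => ha₁p (hsep (hM.card_inter_eq_one h₁ h₃ hX₁ hX₃ h₁₃) hp₁ hp₃ ha₁ (h ▸ ha₃)),
      fun h => ha₂p (hsep (hM.card_inter_eq_one h₂ h₃ hX₂ hX₃ h₂₃) hp₂ hp₃ ha₂ (h ▸ ha₃)), rfl⟩,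
    card_erase_of_mem hpL, M.card3 L hL] at h3
  omega

end IsBinomial

/-- Two distinct freely contained K_n-graphs have exactly n-1
common sides; three pairwise distinct ones have exactly one common side. -/
theorem stmt_8 (n : ℕ) (S : Type) [Fintype S] [DecidableEq S] (M : PSTS S)
    (hM : IsBinomial M (n + 1)) :
    (∀ X₁ X₂ : Finset S, X₁.card = n → X₂.card = n →
      FreelyContains M X₁ → FreelyContains M X₂ → X₁ ≠ X₂ →
      (M.lines.filter (fun L => IsSide M X₁ L ∧ IsSide M X₂ L)).card = n - 1) ∧
    (∀ X₁ X₂ X₃ : Finset S, X₁.card = n → X₂.card = n → X₃.card = n →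
      FreelyContains M X₁ → FreelyContains M X₂ → FreelyContains M X₃ →
      X₁ ≠ X₂ → X₁ ≠ X₃ → X₂ ≠ X₃ →
      (M.lines.filter
        (fun L => IsSide M X₁ L ∧ IsSide M X₂ L ∧ IsSide M X₃ L)).card = 1) := by
  refine ⟨fun X₁ X₂ h₁ h₂ hX₁ hX₂ hne => ?_,
    fun X₁ X₂ X₃ h₁ h₂ h₃ hX₁ hX₂ hX₃ h₁₂ h₁₃ h₂₃ => ?_⟩
  · obtain ⟨p, hp⟩ := hM.exists_inter_eq_singleton h₁ h₂ hX₁ hX₂ hne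
    rw [filter_congr fun L hL => hM.isSide_and_isSide_iff h₁ h₂ hX₁ hX₂ hp hL, ← pointRank,
      hM.2.2 p]
    omega
  · obtain ⟨p, hp⟩ := hM.exists_inter_eq_singleton h₁ h₂ hX₁ hX₂ h₁₂
    obtain ⟨q, hq⟩ := hM.exists_inter_eq_singleton h₁ h₃ hX₁ hX₃ h₁₃
    have hpX : p ∈ X₁ ∩ X₂ := hp ▸ mem_singleton_self p
    have hqX := mem_inter.1 (hq ▸ mem_singleton_self q)
    have hpq : p ≠ q := by
      rintro rfl
      exact disjoint_left.1 (hM.disjoint_inter_of_ne h₁ h₂ h₃ hX₁ hX₂ hX₃ h₁₂ h₁₃ h₂₃) hpX hqX.2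
    obtain ⟨L₀, hL₀, hpL₀, hqL₀, -⟩ := hX₁.1 p (mem_inter.1 hpX).1 q hqX.1 hpq
    rw [← M.card_filter_mem_and_mem hpq hL₀ hpL₀ hqL₀]
    refine congrArg card (filter_congr fun L hL => ?_)
    rw [← hM.isSide_and_isSide_iff h₁ h₂ hX₁ hX₂ hp hL,
      ← hM.isSide_and_isSide_iff h₁ h₃ hX₁ hX₃ hq hL]
    tauto
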